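/- Let s ≥ 0 and b > (s + 1/2)/2 with b > 1/2. Then there is a constant C such that for all τ with |τ| > 1, ∫_0^∞ dz / (⟨z⟩^s ⟨z + τ⟩^{2b} z^{1/2}) ≤ C ⟨τ⟩^{-(s + 1/2)}. -/

import Mathlib

open MeasureTheory

noncomputable def jb (x : ℝ) : ℝ := Real.sqrt (1 + x ^ 2)

/-!
Split the integral at `z = |τ|/2`. For `z ≤ |τ|/2` the point `z + τ` has modulus at least
`|τ|/2 ≥ ⟨τ⟩/4`, so `⟨z + τ⟩^{-2b} ≲ ⟨τ⟩^{-2b}`; bounding `⟨z⟩^{-s}` by `z^{-e}` with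
`e = max 0 (s + 1 - 2b) < 1/2` leaves `∫_0^{|τ|/2} z^{-e-1/2} ≲ ⟨τ⟩^{1/2-e}`, and the choice of
`e` makes `⟨τ⟩^{1/2-e-2b} ≤ ⟨τ⟩^{-(s+1/2)}`. For `z > |τ|/2` we have `z ≥ ⟨τ⟩/4`, so
`⟨z⟩^{-s} z^{-1/2} ≲ ⟨τ⟩^{-(s+1/2)}`, and the remaining factor `⟨z + τ⟩^{-2b}` is integrable
over `ℝ` because `2b > 1`.
-/

open Set Real

lemma jb_pos (x : ℝ) : 0 < jb x := sqrt_pos.mpr (by positivity)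

lemma one_le_jb (x : ℝ) : 1 ≤ jb x := one_le_sqrt.mpr (by nlinarith)

lemma abs_le_jb (x : ℝ) : |x| ≤ jb x := abs_le_sqrt (by nlinarith)

lemma jb_le_two_mul_abs {x : ℝ} (hx : 1 ≤ |x|) : jb x ≤ 2 * |x| :=
  sqrt_le_iff.mpr ⟨by positivity, by nlinarith [sq_abs x]⟩

lemma integrable_jb_rpow_neg {r : ℝ} (hr : 1 < r) : Integrable fun x ↦ jb x ^ (-r) := by
  refine (integrable_rpow_neg_one_add_norm_sq (E := ℝ) (μ := volume) (by simpa)).congr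
    (ae_of_all _ fun x ↦ ?_)
  change (1 + ‖x‖ ^ 2) ^ (-r / 2) = jb x ^ (-r)
  rw [jb, sqrt_eq_rpow, ← rpow_mul (by positivity), norm_eq_abs, sq_abs]
  ring_nf

lemma setIntegral_union_le_add {α : Type*} [MeasurableSpace α] {μ : Measure α}
    {f g₁ g₂ : α → ℝ} {s t : Set α} (hst : Disjoint s t) (hs : MeasurableSet s)
    (ht : MeasurableSet t) (hf : AEStronglyMeasurable f μ) (hf₀ : ∀ x ∈ s ∪ t, 0 ≤ f x)
    (hfg₁ : ∀ x ∈ s, f x ≤ g₁ x) (hfg₂ : ∀ x ∈ t, f x ≤ g₂ x)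
    (hg₁ : IntegrableOn g₁ s μ) (hg₂ : IntegrableOn g₂ t μ) :
    ∫ x in s ∪ t, f x ∂μ ≤ (∫ x in s, g₁ x ∂μ) + ∫ x in t, g₂ x ∂μ := by
  have hf₁ : IntegrableOn f s μ := hg₁.mono' hf.restrict <|
    ae_restrict_of_forall_mem hs fun x hx ↦ by
      rw [norm_of_nonneg (hf₀ x (Or.inl hx))]; exact hfg₁ x hx
  have hf₂ : IntegrableOn f t μ := hg₂.mono' hf.restrict <|
    ae_restrict_of_forall_mem ht fun x hx ↦ by
      rw [norm_of_nonneg (hf₀ x (Or.inr hx))]; exact hfg₂ x hx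
  rw [setIntegral_union hst ht hf₁ hf₂]
  exact add_le_add (setIntegral_mono_on hf₁ hg₁ hs hfg₁) (setIntegral_mono_on hf₂ hg₂ ht hfg₂)

section Majorants

variable {s b τ : ℝ}

lemma integrand_le_of_le_half {e z : ℝ} (he : 0 ≤ e) (hes : e ≤ s) (hb : 0 ≤ b) (hτ : 1 ≤ |τ|)
    (hz : 0 < z) (hzτ : z ≤ |τ| / 2) :
    1 / (jb z ^ s * jb (z + τ) ^ (2 * b) * √z) ≤ (jb τ / 4) ^ (-(2 * b)) * z ^ (-(e + 1/2)) := by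
  have hjz : z ^ e ≤ jb z ^ s := calc
    z ^ e ≤ jb z ^ e := rpow_le_rpow hz.le ((le_abs_self z).trans (abs_le_jb z)) he
    _ ≤ jb z ^ s := rpow_le_rpow_of_exponent_le (one_le_jb z) hes
  have hjzτ : jb τ / 4 ≤ jb (z + τ) := by
    have : |τ| ≤ |z + τ| + z := by simpa [abs_of_pos hz] using abs_add_le (z + τ) (-z)
    linarith [jb_le_two_mul_abs hτ, abs_le_jb (z + τ)]
  have hjτ := jb_pos τ
  have := jb_pos z
  calc 1 / (jb z ^ s * jb (z + τ) ^ (2 * b) * √z)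
      ≤ 1 / (z ^ e * (jb τ / 4) ^ (2 * b) * z ^ (1/2 : ℝ)) := by
        rw [← sqrt_eq_rpow]
        gcongr
    _ = (jb τ / 4) ^ (-(2 * b)) * z ^ (-(e + 1/2)) := by
        rw [rpow_neg (by positivity), rpow_neg hz.le, rpow_add hz]
        field_simp

lemma integrand_le_of_half_lt {z : ℝ} (hs : 0 ≤ s) (hτ : 1 ≤ |τ|) (hzτ : |τ| / 2 < z) :
    1 / (jb z ^ s * jb (z + τ) ^ (2 * b) * √z)
      ≤ (jb τ / 4) ^ (-(s + 1/2)) * jb (z + τ) ^ (-(2 * b)) := by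
  have hτz : jb τ / 4 ≤ z := by linarith [jb_le_two_mul_abs hτ]
  have hz : z ≤ jb z := (le_abs_self z).trans (abs_le_jb z)
  have hjτ := jb_pos τ
  have hjzτ := jb_pos (z + τ)
  have := jb_pos z
  calc 1 / (jb z ^ s * jb (z + τ) ^ (2 * b) * √z)
      ≤ 1 / ((jb τ / 4) ^ s * jb (z + τ) ^ (2 * b) * (jb τ / 4) ^ (1/2 : ℝ)) := by
        rw [sqrt_eq_rpow]
        gcongr
        all_goals linarith
    _ = (jb τ / 4) ^ (-(s + 1/2)) * jb (z + τ) ^ (-(2 * b)) := by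
        rw [rpow_neg (by positivity), rpow_neg hjzτ.le, rpow_add (by positivity)]
        field_simp

lemma setIntegral_Ioc_low_majorant_le {e : ℝ} (he : e < 1/2) (hse : s + 1 - 2 * b ≤ e) :
    ∫ z in Ioc 0 (|τ| / 2), (jb τ / 4) ^ (-(2 * b)) * z ^ (-(e + 1/2))
      ≤ 4 ^ (2 * b) / (1/2 - e) * jb τ ^ (-(s + 1/2)) := by
  have hjτ := jb_pos τ
  have he' : 0 < 1/2 - e := by linarith
  calc ∫ z in Ioc 0 (|τ| / 2), (jb τ / 4) ^ (-(2 * b)) * z ^ (-(e + 1/2))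
      = (jb τ / 4) ^ (-(2 * b)) * ((|τ| / 2) ^ (1/2 - e) / (1/2 - e)) := by
        rw [integral_const_mul, ← intervalIntegral.integral_of_le (by positivity),
          integral_rpow (Or.inl (by linarith)), show -(e + 1/2) + 1 = 1/2 - e by ring,
          zero_rpow he'.ne', sub_zero]
    _ ≤ (jb τ / 4) ^ (-(2 * b)) * (jb τ ^ (1/2 - e) / (1/2 - e)) := by
        gcongr
        linarith [abs_le_jb τ, abs_nonneg τ]
    _ = 4 ^ (2 * b) / (1/2 - e) * jb τ ^ (-(2 * b) + (1/2 - e)) := by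
        rw [div_rpow hjτ.le (by norm_num), rpow_neg (by norm_num : (0:ℝ) ≤ 4), rpow_add hjτ,
          rpow_neg hjτ.le]
        field_simp
    _ ≤ 4 ^ (2 * b) / (1/2 - e) * jb τ ^ (-(s + 1/2)) := by
        gcongr
        · exact one_le_jb τ
        · linarith

lemma setIntegral_Ioi_high_majorant_le (hb : 1/2 < b) :
    ∫ z in Ioi (|τ| / 2), (jb τ / 4) ^ (-(s + 1/2)) * jb (z + τ) ^ (-(2 * b))
      ≤ 4 ^ (s + 1/2) * (∫ x, jb x ^ (-(2 * b))) * jb τ ^ (-(s + 1/2)) := by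
  have hjτ := jb_pos τ
  have hint := (integrable_jb_rpow_neg (r := 2 * b) (by linarith)).comp_add_right τ
  calc ∫ z in Ioi (|τ| / 2), (jb τ / 4) ^ (-(s + 1/2)) * jb (z + τ) ^ (-(2 * b))
      ≤ (jb τ / 4) ^ (-(s + 1/2)) * ∫ z, jb (z + τ) ^ (-(2 * b)) := by
        rw [integral_const_mul]
        exact mul_le_mul_of_nonneg_left (setIntegral_le_integral hint
          (ae_of_all _ fun z ↦ (rpow_pos_of_pos (jb_pos _) _).le)) (by positivity)
    _ = 4 ^ (s + 1/2) * (∫ x, jb x ^ (-(2 * b))) * jb τ ^ (-(s + 1/2)) := by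
        rw [integral_add_right_eq_self (fun x ↦ jb x ^ (-(2 * b))) τ,
          div_rpow hjτ.le (by norm_num), rpow_neg (by norm_num : (0:ℝ) ≤ 4)]
        field_simp

end Majorants

theorem stmt_6 (s b : ℝ) (hs : 0 ≤ s) (hb : (s + 1/2) / 2 < b) (hb' : 1/2 < b) :
    ∃ C : ℝ, ∀ τ : ℝ, 1 < |τ| →
      ∫ z in Set.Ioi (0:ℝ), 1 / (jb z ^ s * jb (z + τ) ^ (2 * b) * Real.sqrt z)
        ≤ C * jb τ ^ (-(s + 1/2)) := by
  set e := max 0 (s + 1 - 2 * b)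
  have he : e < 1/2 := max_lt (by norm_num) (by linarith)
  refine ⟨4 ^ (2 * b) / (1/2 - e) + 4 ^ (s + 1/2) * ∫ x, jb x ^ (-(2 * b)), fun τ hτ ↦ ?_⟩
  have hlow : IntegrableOn (fun z ↦ (jb τ / 4) ^ (-(2 * b)) * z ^ (-(e + 1/2)))
      (Ioc 0 (|τ| / 2)) :=
    (intervalIntegrable_iff_integrableOn_Ioc_of_le (by positivity)).mp
      ((intervalIntegral.intervalIntegrable_rpow' (by linarith)).const_mul _)
  have hhigh : IntegrableOn (fun z ↦ (jb τ / 4) ^ (-(s + 1/2)) * jb (z + τ) ^ (-(2 * b)))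
      (Ioi (|τ| / 2)) :=
    (((integrable_jb_rpow_neg (by linarith)).comp_add_right τ).const_mul _).integrableOn
  rw [← Ioc_union_Ioi_eq_Ioi (by positivity : (0:ℝ) ≤ |τ| / 2)]
  calc _ ≤ (∫ z in Ioc 0 (|τ| / 2), (jb τ / 4) ^ (-(2 * b)) * z ^ (-(e + 1/2)))
        + ∫ z in Ioi (|τ| / 2), (jb τ / 4) ^ (-(s + 1/2)) * jb (z + τ) ^ (-(2 * b)) :=
      setIntegral_union_le_add Ioc_disjoint_Ioi_same measurableSet_Ioc measurableSet_Ioi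
        (by unfold jb; fun_prop : Measurable _).aestronglyMeasurable
        (fun z _ ↦ one_div_nonneg.mpr (by have := jb_pos z; have := jb_pos (z + τ); positivity))
        (fun z hz ↦ integrand_le_of_le_half (le_max_left _ _) (max_le hs (by linarith))
          (by linarith) hτ.le hz.1 hz.2)
        (fun z hz ↦ integrand_le_of_half_lt hs hτ.le hz) hlow hhigh
    _ ≤ 4 ^ (2 * b) / (1/2 - e) * jb τ ^ (-(s + 1/2))
        + 4 ^ (s + 1/2) * (∫ x, jb x ^ (-(2 * b))) * jb τ ^ (-(s + 1/2)) :=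
      add_le_add (setIntegral_Ioc_low_majorant_le he (le_max_right _ _))
        (setIntegral_Ioi_high_majorant_le hb')
    _ = _ := by ring
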